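/- Fix δ > 0 and define f₀(z) = (15/4)·cos z·sin² z − (sin⁴ z)/(4·cos z) for cos z ≠ 0. Let D : ℂ → ℂ and let η : ℝ → ℝ satisfy η(t) → 0 as t → +∞, and suppose that |D(z) − f₀(z)| ≤ η(|z|)·e^{3·|Im z|} for every z ∈ ℂ with |z − (2k+1)π/2| ≥ δ for all k ∈ ℤ. Then there exists C > 0 such that D(z) ≠ 0 for every z ∈ ℂ satisfying: |z| ≥ C; |z − (2k+1)π/2| ≥ δ for all k ∈ ℤ; |z − kπ| ≥ δ for all k ∈ ℤ; and |z − w| ≥ δ for every real w with cos w = 1/4 or cos w = −1/4. -/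

import Mathlib

/-!
Away from the poles `(2k+1)π/2`, `f₀ = sin² z · (16 cos² z - 1) / (4 cos z)`. For `|Im z| ≥ 1`
each of `|sin z|`, `|cos z|` is comparable to `e^{|Im z|}`, so `|f₀ z| ≳ e^{3|Im z|}`. In the strip
`|Im z| ≤ 1`, `f₀` is `2π`-periodic and, once the δ-neighbourhoods of its zeros are removed,
continuous and zero-free on a closed set that is compact modulo `2π`; hence `|f₀|` is bounded below
there. So `|f₀ z| ≥ c e^{3|Im z|}` on the whole admissible region, and `D` cannot vanish once
`η(|z|) < c`.
-/

open Complex Filter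

lemma IsCompact.exists_pos_le_norm {α E : Type*} [TopologicalSpace α] [NormedAddCommGroup E]
    {K : Set α} {f : α → E} (hK : IsCompact K) (hf : ContinuousOn f K)
    (hf₀ : ∀ z ∈ K, f z ≠ 0) : ∃ c > 0, ∀ z ∈ K, c ≤ ‖f z‖ := by
  rcases K.eq_empty_or_nonempty with rfl | hne
  · exact ⟨1, one_pos, by simp⟩
  obtain ⟨z₀, hz₀, hmin⟩ := hK.exists_isMinOn hne hf.norm
  exact ⟨‖f z₀‖, norm_pos_iff.2 (hf₀ z₀ hz₀), fun z hz => hmin hz⟩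

/-- Every point of `S` is a translate by a multiple of `p` of a point of the compact set
`S ∩ {0 ≤ re ≤ p}`, on which the compactness bound applies. -/
lemma exists_pos_le_norm_of_periodic {E : Type*} [NormedAddCommGroup E] {f : ℂ → E}
    {S : Set ℂ} {p b : ℝ} (hp : 0 < p) (hf : Function.Periodic f p) (hS : IsClosed S)
    (hSp : ∀ n : ℤ, ∀ z ∈ S, z + n * p ∈ S) (hb : ∀ z ∈ S, |z.im| ≤ b)
    (hcont : ContinuousOn f S) (hf₀ : ∀ z ∈ S, f z ≠ 0) :
    ∃ c > 0, ∀ z ∈ S, c ≤ ‖f z‖ := by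
  set K := S ∩ re ⁻¹' Set.Icc 0 p
  have hK : IsCompact K := by
    refine (isCompact_closedBall (0 : ℂ) (p + b)).of_isClosed_subset
      (hS.inter (isClosed_Icc.preimage continuous_re)) fun z ⟨hzS, hzre⟩ => ?_
    rw [mem_closedBall_zero_iff]
    calc ‖z‖ ≤ |z.re| + |z.im| := norm_le_abs_re_add_abs_im z
      _ ≤ p + b := add_le_add (abs_le.2 ⟨by linarith [hzre.1], hzre.2⟩) (hb z hzS)
  obtain ⟨c, hc, hcK⟩ := hK.exists_pos_le_norm (hcont.mono Set.inter_subset_left)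
    fun z hz => hf₀ z hz.1
  refine ⟨c, hc, fun z hz => ?_⟩
  set n := toIcoDiv hp 0 z.re
  have hmem : z + (-n : ℤ) * p ∈ K := by
    refine ⟨hSp _ z hz, ?_⟩
    have h := toIcoMod_mem_Ico' hp z.re
    rw [← self_sub_toIcoDiv_zsmul] at h
    simpa [sub_eq_add_neg, zsmul_eq_mul] using Set.Ico_subset_Icc_self h
  simpa only [hf.int_mul (-n) z] using hcK _ hmem

lemma exists_ofReal_eq_of_cos_eq {z : ℂ} {a : ℝ} (ha : |a| ≤ 1) (h : cos z = a) :
    ∃ w : ℝ, Real.cos w = a ∧ (w : ℂ) = z := by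
  obtain ⟨ha₁, ha₂⟩ := abs_le.1 ha
  rw [← Real.cos_arccos ha₁ ha₂, ofReal_cos, eq_comm, cos_eq_cos_iff] at h
  obtain ⟨k, rfl | rfl⟩ := h
  · refine ⟨Real.arccos a + k * (2 * Real.pi), ?_, by push_cast; ring⟩
    rw [Real.cos_add_int_mul_two_pi, Real.cos_arccos ha₁ ha₂]
  · refine ⟨-Real.arccos a + k * (2 * Real.pi), ?_, by push_cast; ring⟩
    rw [Real.cos_add_int_mul_two_pi, Real.cos_neg, Real.cos_arccos ha₁ ha₂]

lemma norm_sin_sq (z : ℂ) : ‖sin z‖ ^ 2 = Real.sin z.re ^ 2 + Real.sinh z.im ^ 2 := by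
  rw [Complex.sq_norm, normSq_apply, sin_eq]
  simp [← ofReal_sin, ← ofReal_cos, ← ofReal_sinh, ← ofReal_cosh]
  linear_combination Real.sin z.re ^ 2 * Real.cosh_sq z.im +
    Real.sinh z.im ^ 2 * Real.sin_sq_add_cos_sq z.re

lemma norm_cos_sq (z : ℂ) : ‖cos z‖ ^ 2 = Real.cos z.re ^ 2 + Real.sinh z.im ^ 2 := by
  rw [Complex.sq_norm, normSq_apply, cos_eq]
  simp [← ofReal_sin, ← ofReal_cos, ← ofReal_sinh, ← ofReal_cosh]
  linear_combination Real.cos z.re ^ 2 * Real.cosh_sq z.im +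
    Real.sinh z.im ^ 2 * Real.sin_sq_add_cos_sq z.re

lemma sinh_abs_im_le_norm_sin (z : ℂ) : Real.sinh |z.im| ≤ ‖sin z‖ := by
  rw [← Real.abs_sinh]
  exact abs_le_of_sq_le_sq (by nlinarith [norm_sin_sq z, sq_nonneg (Real.sin z.re)])
    (norm_nonneg _)

lemma sinh_abs_im_le_norm_cos (z : ℂ) : Real.sinh |z.im| ≤ ‖cos z‖ := by
  rw [← Real.abs_sinh]
  exact abs_le_of_sq_le_sq (by nlinarith [norm_cos_sq z, sq_nonneg (Real.cos z.re)])
    (norm_nonneg _)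

lemma norm_cos_le_cosh_abs_im (z : ℂ) : ‖cos z‖ ≤ Real.cosh |z.im| := by
  rw [Real.cosh_abs, ← sq_le_sq₀ (norm_nonneg _) (Real.cosh_pos _).le, norm_cos_sq,
    Real.cosh_sq]
  nlinarith [Real.cos_sq_le_one z.re]

noncomputable def f₀ (z : ℂ) : ℂ :=
  (15 / 4) * cos z * sin z ^ 2 - sin z ^ 4 / (4 * cos z)

lemma f₀_eq {z : ℂ} (h : cos z ≠ 0) :
    f₀ z = sin z ^ 2 * (16 * cos z ^ 2 - 1) / (4 * cos z) := by
  have h4 : 4 * cos z ≠ 0 := mul_ne_zero (by norm_num) h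
  rw [f₀, eq_div_iff h4, sub_mul, div_mul_cancel₀ _ h4]
  linear_combination (-sin z ^ 2) * sin_sq_add_cos_sq z

lemma f₀_periodic : Function.Periodic f₀ (2 * Real.pi : ℝ) := by
  intro z
  push_cast
  simp only [f₀, sin_add_two_pi, cos_add_two_pi]

lemma continuousOn_f₀ : ContinuousOn f₀ {z | cos z ≠ 0} := by
  unfold f₀
  exact (by fun_prop : Continuous fun z => 15 / 4 * cos z * sin z ^ 2).continuousOn.sub
    ((by fun_prop : Continuous fun z => sin z ^ 4).continuousOn.div (by fun_prop)
      fun z hz => mul_ne_zero (by norm_num) hz)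

lemma mul_exp_le_norm_f₀ {z : ℂ} (hz : 1 ≤ |z.im|) :
    3 / 256 * Real.exp (3 * |z.im|) ≤ ‖f₀ z‖ := by
  set e := Real.exp |z.im|
  have he : 2 ≤ e := by linarith [Real.add_one_le_exp 1, Real.exp_le_exp.2 hz]
  have hsinh : e / 4 ≤ Real.sinh |z.im| := by
    have : Real.exp (-|z.im|) ≤ 1 / 2 := by
      rw [Real.exp_neg, inv_le_comm₀ (Real.exp_pos _) (by norm_num)]; linarith
    rw [Real.sinh_eq]; linarith
  have hcosh : Real.cosh |z.im| ≤ e := by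
    rw [Real.cosh_eq]; linarith [Real.exp_le_exp.2 (show -|z.im| ≤ |z.im| by linarith)]
  have hsin : e / 4 ≤ ‖sin z‖ := hsinh.trans (sinh_abs_im_le_norm_sin z)
  have hcos : e / 4 ≤ ‖cos z‖ := hsinh.trans (sinh_abs_im_le_norm_cos z)
  have hcos' : ‖cos z‖ ≤ e := (norm_cos_le_cosh_abs_im z).trans hcosh
  have hcos₀ : 0 < ‖cos z‖ := by linarith
  have hquad : 3 / 4 * e ^ 2 ≤ ‖16 * cos z ^ 2 - 1‖ := by
    have := norm_sub_norm_le (16 * cos z ^ 2) 1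
    norm_num [norm_mul, norm_pow] at this
    nlinarith
  have hexp : Real.exp (3 * |z.im|) = e ^ 3 := by rw [← Real.exp_nat_mul]; norm_num
  rw [f₀_eq (norm_pos_iff.1 hcos₀), norm_div, norm_mul, norm_pow, norm_mul, Complex.norm_ofNat,
    hexp, le_div_iff₀ (by linarith)]
  calc 3 / 256 * e ^ 3 * (4 * ‖cos z‖) ≤ 3 / 256 * e ^ 3 * (4 * e) := by gcongr
    _ = (e / 4) ^ 2 * (3 / 4 * e ^ 2) := by ring
    _ ≤ ‖sin z‖ ^ 2 * ‖16 * cos z ^ 2 - 1‖ := by gcongr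

/-- `G_δ` of the paper with the δ-neighbourhoods of the zeros `kπ` and
`2kπ ± arccos (±1/4)` of `f₀` removed. -/
def admissible (δ : ℝ) : Set ℂ :=
  {z | (∀ k : ℤ, δ ≤ ‖z - ((2 * (k : ℂ) + 1) * Real.pi / 2)‖) ∧
    (∀ k : ℤ, δ ≤ ‖z - (k : ℂ) * Real.pi‖) ∧
    ∀ w : ℝ, (Real.cos w = 1 / 4 ∨ Real.cos w = -(1 / 4)) → δ ≤ ‖z - (w : ℂ)‖}

lemma isClosed_admissible (δ : ℝ) : IsClosed (admissible δ) := by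
  simp only [admissible, Set.ofPred_and, Set.ofPred_forall]
  have hclosed (a : ℂ) : IsClosed {z : ℂ | δ ≤ ‖z - a‖} :=
    isClosed_le continuous_const (by fun_prop)
  exact (isClosed_iInter fun k => hclosed _).inter ((isClosed_iInter fun k => hclosed _).inter
    (isClosed_iInter fun w => isClosed_iInter fun _ => hclosed _))

section admissible

variable {δ : ℝ} {z : ℂ}

lemma add_int_mul_two_pi_mem_admissible (n : ℤ) (hz : z ∈ admissible δ) :
    z + n * (2 * Real.pi : ℝ) ∈ admissible δ := by
  obtain ⟨hpole, hsin, hquarter⟩ := hz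
  refine ⟨fun k => ?_, fun k => ?_, fun w hw => ?_⟩
  · convert hpole (k - 2 * n) using 2; push_cast; ring
  · convert hsin (k - 2 * n) using 2; push_cast; ring
  · convert hquarter (w - n * (2 * Real.pi)) (by rwa [Real.cos_sub_int_mul_two_pi]) using 2
    push_cast; ring

lemma cos_ne_zero_of_mem_admissible (hδ : 0 < δ) (hz : z ∈ admissible δ) : cos z ≠ 0 := by
  intro h
  obtain ⟨k, rfl⟩ := cos_eq_zero_iff.1 h
  simpa [hδ.not_ge] using hz.1 k

lemma f₀_ne_zero_of_mem_admissible (hδ : 0 < δ) (hz : z ∈ admissible δ) : f₀ z ≠ 0 := by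
  have hcos := cos_ne_zero_of_mem_admissible hδ hz
  obtain ⟨-, hsin, hquarter⟩ := hz
  rw [f₀_eq hcos]
  refine div_ne_zero (mul_ne_zero (pow_ne_zero 2 fun h => ?_) fun h => ?_)
    (mul_ne_zero (by norm_num) hcos)
  · obtain ⟨k, rfl⟩ := sin_eq_zero_iff.1 h
    simpa [hδ.not_ge] using hsin k
  · obtain ⟨a, ha, hcos_eq⟩ : ∃ a : ℝ, (a = 1 / 4 ∨ a = -(1 / 4)) ∧ cos z = a := by
      rcases mul_eq_zero.1 (by linear_combination h : (4 * cos z - 1) * (4 * cos z + 1) = 0)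
        with h | h
      · exact ⟨1 / 4, Or.inl rfl, by push_cast; linear_combination h / 4⟩
      · exact ⟨-(1 / 4), Or.inr rfl, by push_cast; linear_combination h / 4⟩
    have ha_le : |a| ≤ 1 := by rcases ha with rfl | rfl <;> norm_num [abs_le]
    obtain ⟨w, hw, rfl⟩ := exists_ofReal_eq_of_cos_eq ha_le hcos_eq
    simpa [hδ.not_ge] using hquarter w (hw ▸ ha)

lemma exists_pos_le_norm_f₀_of_abs_im_le_one (hδ : 0 < δ) :
    ∃ c > 0, ∀ z ∈ admissible δ ∩ {z | |z.im| ≤ 1}, c ≤ ‖f₀ z‖ :=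
  exists_pos_le_norm_of_periodic Real.two_pi_pos f₀_periodic
    ((isClosed_admissible δ).inter (isClosed_le (by fun_prop) continuous_const))
    (fun n z hz => ⟨add_int_mul_two_pi_mem_admissible n hz.1, by simpa using hz.2⟩)
    (fun z hz => hz.2)
    (continuousOn_f₀.mono fun z hz => cos_ne_zero_of_mem_admissible hδ hz.1)
    (fun z hz => f₀_ne_zero_of_mem_admissible hδ hz.1)

lemma exists_pos_mul_exp_le_norm_f₀ (hδ : 0 < δ) :
    ∃ c > 0, ∀ z ∈ admissible δ, c * Real.exp (3 * |z.im|) ≤ ‖f₀ z‖ := by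
  obtain ⟨c, hc, hstrip⟩ := exists_pos_le_norm_f₀_of_abs_im_le_one hδ
  refine ⟨min (c * Real.exp (-3)) (3 / 256), by positivity, fun z hz => ?_⟩
  rcases le_or_gt |z.im| 1 with him | him
  · calc min (c * Real.exp (-3)) (3 / 256) * Real.exp (3 * |z.im|)
        ≤ c * Real.exp (-3) * Real.exp 3 := by
          gcongr
          · exact min_le_left _ _
          · linarith
      _ = c := by rw [mul_assoc, ← Real.exp_add]; simp
      _ ≤ ‖f₀ z‖ := hstrip z ⟨hz, him⟩
  · exact (mul_le_mul_of_nonneg_right (min_le_right _ _) (Real.exp_pos _).le).trans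
      (mul_exp_le_norm_f₀ him.le)

end admissible

/-- Unique solvability (Proposition 1): if `D` approximates
`f₀(z) = (15/4)·cos z·sin² z − sin⁴ z/(4 cos z)` up to `o(e^{3|Im z|})` in the
region `G_δ`, then `D` has no zeros of large modulus away from δ-neighborhoods
of the zeros of `f₀`. -/
theorem stmt_6 (δ : ℝ) (hδ : 0 < δ) (D : ℂ → ℂ) (η : ℝ → ℝ)
    (hη : Tendsto η atTop (nhds 0))
    (hD : ∀ z : ℂ,
      (∀ k : ℤ, δ ≤ ‖z - ((2 * (k : ℂ) + 1) * Real.pi / 2)‖) →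
      ‖D z - ((15 / 4) * Complex.cos z * Complex.sin z ^ 2
          - Complex.sin z ^ 4 / (4 * Complex.cos z))‖ ≤
        η ‖z‖ * Real.exp (3 * |z.im|)) :
    ∃ C : ℝ, 0 < C ∧
      ∀ z : ℂ, C ≤ ‖z‖ →
        (∀ k : ℤ, δ ≤ ‖z - ((2 * (k : ℂ) + 1) * Real.pi / 2)‖) →
        (∀ k : ℤ, δ ≤ ‖z - (k : ℂ) * Real.pi‖) →
        (∀ w : ℝ, (Real.cos w = 1 / 4 ∨ Real.cos w = -(1 / 4)) →
          δ ≤ ‖z - (w : ℂ)‖) →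
        D z ≠ 0 := by
  obtain ⟨c, hc, hf₀⟩ := exists_pos_mul_exp_le_norm_f₀ hδ
  obtain ⟨T, hT⟩ := eventually_atTop.1 (hη.eventually (gt_mem_nhds hc))
  refine ⟨max T 1, by positivity, fun z hzT hpole hsin hquarter hDz => ?_⟩
  have hlower := hf₀ z ⟨hpole, hsin, hquarter⟩
  have hupper : ‖f₀ z‖ ≤ η ‖z‖ * Real.exp (3 * |z.im|) := by
    have := hD z hpole
    rwa [hDz, zero_sub, norm_neg] at this
  have hsmall : η ‖z‖ < c := hT _ (le_of_max_le_left hzT)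
  nlinarith [Real.exp_pos (3 * |z.im|)]
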